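/- arXiv:2605.12697 — 4 statements merged into one kernel-verified Lean document; each statement's English description precedes it below -/
import Mathlib

section
/- (Subcritical direction of the main theorem.) Let, for each n ≥ 2, scores z_{n,1},…,z_{n,n} be given with Λ_n < ∞ for all sufficiently large n, and let (β_n) be a positive deterministic sequence with β_n/Λ_n → 0 as n → ∞. Then the top-two weight gap satisfies D_n(β_n) → 0. -/
open Filter MeasureTheory
open scoped ENNReal

/-- Maximum score `z_n^*`. -/
noncomputable def zmax (n : ℕ) (z : Fin n → ℝ) : ℝ := sSup (Set.range z)

/-- Gap `g_{n,j} = z_n^* - z_{n,j}`. -/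
noncomputable def gap (n : ℕ) (z : Fin n → ℝ) (j : Fin n) : ℝ := zmax n z - z j

/-- Cumulative gap-counting function `N_n(t)`. -/
noncomputable def Ncount (n : ℕ) (z : Fin n → ℝ) (t : ℝ) : ℕ :=
  {j : Fin n | gap n z j ≤ t}.ncard

/-- Normalised partition function `Z_n(β)`. -/
noncomputable def Zfun (n : ℕ) (z : Fin n → ℝ) (β : ℝ) : ℝ :=
  ∑ j : Fin n, Real.exp (-(β * gap n z j))

/-- Softmax probabilities `p_{n,j}(β)`. -/
noncomputable def softmaxP (n : ℕ) (z : Fin n → ℝ) (β : ℝ) (j : Fin n) : ℝ :=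
  Real.exp (β * z j) / ∑ ℓ : Fin n, Real.exp (β * z ℓ)

/-- Shannon entropy `H_n(β)`. -/
noncomputable def entropyH (n : ℕ) (z : Fin n → ℝ) (β : ℝ) : ℝ :=
  -∑ j : Fin n, softmaxP n z β j * Real.log (softmaxP n z β j)

/-- The set of values `log N_n(t) / t` over `t > 0`, whose supremum is `Λ_n`. -/
def lamSet (n : ℕ) (z : Fin n → ℝ) : Set ℝ :=
  {r | ∃ t : ℝ, 0 < t ∧ r = Real.log (Ncount n z t) / t}

/-- Second-largest entry of a finite vector (equals the largest in case of ties). -/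
noncomputable def secondLargest (n : ℕ) (v : Fin n → ℝ) : ℝ :=
  sInf (Set.range fun i => sSup (v '' {j | j ≠ i}))

/-- Top-two weight gap `D_n(β)`. -/
noncomputable def Dgap (n : ℕ) (z : Fin n → ℝ) (β : ℝ) : ℝ :=
  sSup (Set.range (softmaxP n z β)) - secondLargest n (softmaxP n z β)

/-- Rank gap `G_n(β) = max_{i,j} |p_{n,i}(β) - p_{n,j}(β)|`. -/
noncomputable def Ggap (n : ℕ) (z : Fin n → ℝ) (β : ℝ) : ℝ :=
  sSup {x | ∃ i j : Fin n, x = |softmaxP n z β i - softmaxP n z β j|}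

/-- Resolved accumulation scale `Λ_n^{(r)}` (with `sup ∅ = 0`), valued in `ℝ≥0∞`. -/
noncomputable def resolvedLam (n : ℕ) (z : Fin n → ℝ) (r : ℝ) : ℝ≥0∞ :=
  ⨆ t ∈ {t : ℝ | 0 < t ∧ r < Real.log (Ncount n z t)},
    ENNReal.ofReal ((Real.log (Ncount n z t) - r) / t)

/-- Laplace envelope `S_n(β) = sup_{t ≥ 0} (log N_n(t) - β t)`. -/
noncomputable def Sfun (n : ℕ) (z : Fin n → ℝ) (β : ℝ) : ℝ :=
  sSup {x | ∃ t : ℝ, 0 ≤ t ∧ x = Real.log (Ncount n z t) - β * t}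

/-- Rank boundary `B_n^rank(r) = sup {β ≥ 0 : log Z_n(β) ≥ r}`, valued in `ℝ≥0∞`. -/
noncomputable def rankBoundary (n : ℕ) (z : Fin n → ℝ) (r : ℝ) : ℝ≥0∞ :=
  ⨆ β ∈ {β : ℝ | 0 ≤ β ∧ r ≤ Real.log (Zfun n z β)}, ENNReal.ofReal β

/-- `X_n ≍ (log n)^ξ`. -/
def IsLogAsymp (X : ℕ → ℝ) (ξ : ℝ) : Prop :=
  ∃ c₁ c₂ : ℝ, 0 < c₁ ∧ c₁ ≤ c₂ ∧
    ∀ᶠ n : ℕ in Filter.atTop,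
      c₁ * Real.log n ^ ξ ≤ X n ∧ X n ≤ c₂ * Real.log n ^ ξ

lemma gap_nonneg {n : ℕ} (z : Fin n → ℝ) (j : Fin n) : 0 ≤ gap n z j := by
  have h : z j ≤ zmax n z := le_csSup (Set.finite_range z).bddAbove ⟨j, rfl⟩
  simp only [gap]; linarith

lemma exists_gap_zero {n : ℕ} (hn : 1 ≤ n) (z : Fin n → ℝ) : ∃ j, gap n z j = 0 := by
  have hne : Nonempty (Fin n) := ⟨⟨0, by omega⟩⟩
  obtain ⟨j, hj⟩ := Finite.exists_max z
  refine ⟨j, ?_⟩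
  have h1 : zmax n z ≤ z j :=
    csSup_le (Set.range_nonempty z) (by rintro _ ⟨i, rfl⟩; exact hj i)
  have h2 : z j ≤ zmax n z := le_csSup (Set.finite_range z).bddAbove ⟨j, rfl⟩
  simp only [gap]; linarith

lemma Zfun_pos {n : ℕ} (hn : 1 ≤ n) (z : Fin n → ℝ) (β : ℝ) : 0 < Zfun n z β := by
  have hne : Nonempty (Fin n) := ⟨⟨0, by omega⟩⟩
  exact Finset.sum_pos (fun _ _ => Real.exp_pos _) Finset.univ_nonempty

lemma one_le_Zfun {n : ℕ} (hn : 1 ≤ n) (z : Fin n → ℝ) (β : ℝ) : 1 ≤ Zfun n z β := by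
  obtain ⟨j, hj⟩ := exists_gap_zero hn z
  have := Finset.single_le_sum (f := fun j => Real.exp (-(β * gap n z j)))
    (fun i _ => (Real.exp_pos _).le) (Finset.mem_univ j)
  simpa [Zfun, hj] using this

lemma softmax_eq {n : ℕ} (z : Fin n → ℝ) (β : ℝ) (j : Fin n) :
    softmaxP n z β j = Real.exp (-(β * gap n z j)) / Zfun n z β := by
  have key : ∀ i : Fin n, Real.exp (-(β * gap n z i))
      = Real.exp (β * z i) * Real.exp (-(β * zmax n z)) := by
    intro i; rw [← Real.exp_add]; unfold gap; ring_nf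
  unfold softmaxP Zfun
  simp only [key, ← Finset.sum_mul]
  rw [mul_div_mul_right _ _ (Real.exp_ne_zero _)]

lemma Zfun_ge {n : ℕ} (z : Fin n → ℝ) {β t : ℝ} (hβ : 0 < β) (ht : 0 < t) :
    (Ncount n z t : ℝ) * Real.exp (-(β * t)) ≤ Zfun n z β := by
  classical
  have hN : Ncount n z t = ({j : Fin n | gap n z j ≤ t}.toFinset).card :=
    Set.ncard_eq_toFinset_card' _
  have h1 : (Ncount n z t : ℝ) * Real.exp (-(β * t))
      = ∑ _j ∈ {j : Fin n | gap n z j ≤ t}.toFinset, Real.exp (-(β * t)) := by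
    rw [Finset.sum_const, hN, nsmul_eq_mul]
  rw [h1]
  calc ∑ j ∈ {j : Fin n | gap n z j ≤ t}.toFinset, Real.exp (-(β * t))
      ≤ ∑ j ∈ {j : Fin n | gap n z j ≤ t}.toFinset, Real.exp (-(β * gap n z j)) := by
        apply Finset.sum_le_sum
        intro j hj
        have hjt : gap n z j ≤ t := by simpa using hj
        apply Real.exp_le_exp.mpr
        nlinarith
    _ ≤ Zfun n z β := Finset.sum_le_sum_of_subset_of_nonneg (Finset.subset_univ _)
        (fun i _ _ => (Real.exp_pos _).le)

lemma sSup_softmax_le {n : ℕ} (hn : 1 ≤ n) (z : Fin n → ℝ) {β : ℝ} (hβ : 0 < β) :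
    sSup (Set.range (softmaxP n z β)) ≤ 1 / Zfun n z β := by
  have hne : Nonempty (Fin n) := ⟨⟨0, by omega⟩⟩
  apply csSup_le (Set.range_nonempty _)
  rintro _ ⟨j, rfl⟩
  rw [softmax_eq, div_le_div_iff_of_pos_right (Zfun_pos hn z β)]
  rw [← Real.exp_zero]
  apply Real.exp_le_exp.mpr
  nlinarith [gap_nonneg z j]

lemma le_secondLargest {n : ℕ} (hn : 2 ≤ n) (v : Fin n → ℝ) (b : ℝ)
    {j₁ j₂ : Fin n} (hne : j₁ ≠ j₂) (h1 : b ≤ v j₁) (h2 : b ≤ v j₂) :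
    b ≤ secondLargest n v := by
  have hne' : Nonempty (Fin n) := ⟨⟨0, by omega⟩⟩
  apply le_csInf (Set.range_nonempty _)
  rintro _ ⟨i, rfl⟩
  have hbdd : BddAbove (v '' {j | j ≠ i}) := ((Set.toFinite _).image v).bddAbove
  rcases ne_or_eq j₁ i with h | h
  · exact h1.trans (le_csSup hbdd ⟨j₁, h, rfl⟩)
  · exact h2.trans (le_csSup hbdd ⟨j₂, by simp [Set.mem_setOf_eq]; omega, rfl⟩)

lemma secondLargest_le_sSup {n : ℕ} (hn : 2 ≤ n) (v : Fin n → ℝ) :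
    secondLargest n v ≤ sSup (Set.range v) := by
  have hne' : Nonempty (Fin n) := ⟨⟨0, by omega⟩⟩
  have : Nontrivial (Fin n) := Fin.nontrivial_iff_two_le.mpr hn
  have i₀ : Fin n := ⟨0, by omega⟩
  obtain ⟨j, hj⟩ := exists_ne i₀
  have hstep : sSup (v '' {j | j ≠ i₀}) ≤ sSup (Set.range v) :=
    csSup_le_csSup (Set.finite_range v).bddAbove ⟨v j, ⟨j, hj, rfl⟩⟩
      (Set.image_subset_range _ _)
  calc secondLargest n v ≤ sSup (v '' {j | j ≠ i₀}) :=
        csInf_le ((Set.finite_range _).bddBelow) ⟨i₀, rfl⟩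
    _ ≤ _ := hstep

lemma Dgap_nonneg {n : ℕ} (hn : 2 ≤ n) (z : Fin n → ℝ) (β : ℝ) :
    0 ≤ Dgap n z β := by
  have := secondLargest_le_sSup hn (softmaxP n z β)
  unfold Dgap; linarith

lemma Dgap_le {n : ℕ} (hn : 2 ≤ n) (z : Fin n → ℝ) {β t : ℝ} (hβ : 0 < β) (ht : 0 < t)
    (hN : 2 ≤ Ncount n z t) :
    Dgap n z β ≤ (1 - Real.exp (-(β * t))) / Zfun n z β := by
  have hN' : 1 < ({j : Fin n | gap n z j ≤ t}).ncard := by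
    unfold Ncount at hN; omega
  obtain ⟨j₁, j₂, hj₁, hj₂, hnej⟩ := (Set.one_lt_ncard_iff (Set.toFinite _)).mp hN'
  have hj₁' : gap n z j₁ ≤ t := hj₁
  have hj₂' : gap n z j₂ ≤ t := hj₂
  have hZ := Zfun_pos (by omega) z β
  have hb : ∀ j : Fin n, gap n z j ≤ t →
      Real.exp (-(β * t)) / Zfun n z β ≤ softmaxP n z β j := by
    intro j hjt
    rw [softmax_eq, div_le_div_iff_of_pos_right hZ]
    apply Real.exp_le_exp.mpr
    nlinarith
  have h2 : Real.exp (-(β * t)) / Zfun n z β ≤ secondLargest n (softmaxP n z β) :=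
    le_secondLargest hn _ _ hnej (hb j₁ hj₁') (hb j₂ hj₂')
  have h1 := sSup_softmax_le (by omega) z hβ
  unfold Dgap
  rw [sub_div]
  linarith

lemma lam_pos {n : ℕ} (hn : 2 ≤ n) {z : Fin n → ℝ} {Λ : ℝ}
    (hL : IsLUB (lamSet n z) Λ) : 0 < Λ := by
  have hne : Nonempty (Fin n) := ⟨⟨0, by omega⟩⟩
  set t : ℝ := (Finset.univ.sup' Finset.univ_nonempty (gap n z)) + 1 with htdef
  have hgap : ∀ j, gap n z j ≤ t := fun j =>
    le_trans (Finset.le_sup' _ (Finset.mem_univ j)) (by simp [htdef])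
  have ht0 : 0 < t := by
    have h1 := gap_nonneg z (⟨0, by omega⟩ : Fin n)
    have h2 := Finset.le_sup' (gap n z) (Finset.mem_univ (⟨0, by omega⟩ : Fin n))
    simp only [htdef]; linarith
  have hNt : Ncount n z t = n := by
    unfold Ncount
    have h : {j : Fin n | gap n z j ≤ t} = Set.univ := by
      ext j; simpa using hgap j
    rw [h, Set.ncard_univ]; simp
  have hmem : Real.log n / t ∈ lamSet n z := ⟨t, ht0, by rw [hNt]⟩
  have hpos : 0 < Real.log n / t :=
    div_pos (Real.log_pos (by exact_mod_cast (by omega : 1 < n))) ht0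
  exact lt_of_lt_of_le hpos (hL.1 hmem)

theorem stmt4 (z : (n : ℕ) → Fin n → ℝ) (Λ β : ℕ → ℝ)
    (hβ : ∀ n, 0 < β n)
    (hΛ : ∀ᶠ n in atTop, IsLUB (lamSet n (z n)) (Λ n))
    (hsub : Tendsto (fun n => β n / Λ n) atTop (nhds 0)) :
    Tendsto (fun n => Dgap n (z n) (β n)) atTop (nhds 0) := by
  rw [Metric.tendsto_atTop]
  intro ε hε
  have hq0 : ∀ᶠ n in atTop, 0 < Λ n := by
    filter_upwards [hΛ, eventually_ge_atTop 2] with n hL hn using lam_pos hn hL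
  have hqpos : ∀ᶠ n in atTop, β n / Λ n ∈ Set.Ioi (0:ℝ) := by
    filter_upwards [hq0] with n h using div_pos (hβ n) h
  have hq' : Tendsto (fun n => β n / Λ n) atTop (nhdsWithin 0 (Set.Ioi 0)) :=
    tendsto_nhdsWithin_iff.mpr ⟨hsub, hqpos⟩
  have hinv : Tendsto (fun n => (β n / Λ n)⁻¹) atTop atTop :=
    tendsto_inv_nhdsGT_zero.comp hq'
  have hbot : Tendsto (fun n => ε/2 * (1 - (β n / Λ n)⁻¹ / 2)) atTop atBot := by
    apply Filter.Tendsto.const_mul_atBot (by linarith)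
    simp only [sub_eq_add_neg]
    apply Filter.tendsto_atBot_add_const_left _ 1
    exact tendsto_neg_atTop_atBot.comp (hinv.atTop_div_const two_pos)
  have hexplt : ∀ᶠ n in atTop,
      Real.exp (ε/2 * (1 - (β n / Λ n)⁻¹ / 2)) < ε :=
    (Real.tendsto_exp_atBot.comp hbot).eventually_lt_const hε
  have hqhalf : ∀ᶠ n in atTop, β n / Λ n < 1/2 :=
    hsub.eventually_lt_const (by norm_num)
  have hmain : ∀ᶠ n in atTop, dist (Dgap n (z n) (β n)) 0 < ε := by
    filter_upwards [eventually_ge_atTop 2, hΛ, hq0, hqhalf, hexplt] with n hn hL hΛp hqh hE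
    obtain ⟨c, ⟨t, ht0, rfl⟩, hc1, -⟩ := hL.exists_between (half_lt_self (lam_pos hn hL))
    have hlogN : Λ n / 2 * t < Real.log (Ncount n (z n) t) := by
      rwa [lt_div_iff₀ ht0] at hc1
    have hlogpos : 0 < Real.log (Ncount n (z n) t) :=
      lt_of_le_of_lt (by positivity) hlogN
    have hN2 : 2 ≤ Ncount n (z n) t := by
      by_contra h
      push_neg at h
      have h1 : ((Ncount n (z n) t : ℝ)) ≤ 1 := by exact_mod_cast Nat.lt_succ_iff.mp h
      have := Real.log_nonpos (by positivity) h1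
      linarith
    have hD0 := Dgap_nonneg hn (z n) (β n)
    have hZ1 := one_le_Zfun (by omega) (z n) (β n)
    have hZpos := Zfun_pos (by omega) (z n) (β n)
    have hDle := Dgap_le hn (z n) (hβ n) ht0 hN2
    have hexm1 : Real.exp (-(β n * t)) ≤ 1 := by
      rw [← Real.exp_zero]
      apply Real.exp_le_exp.mpr
      nlinarith [(hβ n), ht0]
    rw [Real.dist_eq, sub_zero, abs_of_nonneg hD0]
    rcases le_or_gt (β n * t) (ε/2) with hx | hx
    · have h1 : (1 - Real.exp (-(β n * t))) / Zfun n (z n) (β n)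
          ≤ 1 - Real.exp (-(β n * t)) := div_le_self (by linarith) hZ1
      have h2 := Real.add_one_le_exp (-(β n * t))
      linarith
    · have hNpos : (0:ℝ) < (Ncount n (z n) t : ℝ) := by
        exact_mod_cast (by omega : 0 < Ncount n (z n) t)
      have hNge : Real.exp (Λ n / 2 * t) ≤ (Ncount n (z n) t : ℝ) := by
        calc Real.exp (Λ n / 2 * t) ≤ Real.exp (Real.log (Ncount n (z n) t)) :=
              Real.exp_le_exp.mpr hlogN.le
          _ = _ := Real.exp_log hNpos
      have hZge : Real.exp (Λ n / 2 * t - β n * t) ≤ Zfun n (z n) (β n) := by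
        calc Real.exp (Λ n / 2 * t - β n * t)
            = Real.exp (Λ n / 2 * t) * Real.exp (-(β n * t)) := by
              rw [← Real.exp_add]; ring_nf
          _ ≤ (Ncount n (z n) t : ℝ) * Real.exp (-(β n * t)) :=
              mul_le_mul_of_nonneg_right hNge (Real.exp_pos _).le
          _ ≤ _ := Zfun_ge (z n) (hβ n) ht0
      have h1 : Dgap n (z n) (β n) ≤ 1 / Zfun n (z n) (β n) := by
        refine hDle.trans ?_
        exact (div_le_div_iff_of_pos_right hZpos).mpr
          (by linarith [Real.exp_pos (-(β n * t))])
      have h2 : 1 / Zfun n (z n) (β n) ≤ Real.exp (β n * t - Λ n / 2 * t) := by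
        have h := one_div_le_one_div_of_le (Real.exp_pos _) hZge
        rwa [one_div (Real.exp _), ← Real.exp_neg, neg_sub] at h
      have hqinv : 2 < (β n / Λ n)⁻¹ := by
        have hqp : 0 < β n / Λ n := div_pos (hβ n) hΛp
        nlinarith [mul_inv_cancel₀ (ne_of_gt hqp)]
      have hfact : β n * t - Λ n / 2 * t = (β n * t) * (1 - (β n / Λ n)⁻¹ / 2) := by
        rw [inv_div]
        field_simp [(hβ n).ne']
      have h3 : β n * t - Λ n / 2 * t ≤ ε/2 * (1 - (β n / Λ n)⁻¹ / 2) := by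
        rw [hfact]
        exact mul_le_mul_of_nonpos_right hx.le (by linarith)
      calc Dgap n (z n) (β n) ≤ Real.exp (β n * t - Λ n / 2 * t) := h1.trans h2
        _ ≤ Real.exp (ε/2 * (1 - (β n / Λ n)⁻¹ / 2)) := Real.exp_le_exp.mpr h3
        _ < ε := hE
  exact eventually_atTop.mp hmain
end

section
/- (Quantitative subcritical bound.) Fix n ≥ 2 and suppose N_n(0) = 1 and Λ_n < ∞, with contact gap Δ_n and contact accumulation exponent α_n := log N_n(Δ_n)/log n. Then for every β with 0 < β ≤ Λ_n/2, the normalised partition function satisfies Z_n(β) ≥ n^{α_n/2} and the top-two weight gap satisfies D_n(β) ≤ (2/e) · (β/Λ_n). -/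
open Filter MeasureTheory
open scoped ENNReal

lemma xexp_aux (c x : ℝ) (hc : 0 ≤ c) (hx : 0 < x) :
    2 * c * x ≤ 2 / Real.exp 1 * c * Real.exp x := by
  have h := Real.add_one_le_exp (x - 1)
  have h2 : Real.exp x = Real.exp (x - 1) * Real.exp 1 := by
    rw [← Real.exp_add]; ring_nf
  have hE := Real.exp_pos 1
  have hxe : Real.exp 1 * x ≤ Real.exp x := by nlinarith
  rw [div_mul_eq_mul_div, div_mul_eq_mul_div, le_div_iff₀ hE]
  nlinarith

theorem stmt8 (n : ℕ) (hn : 2 ≤ n) (z : Fin n → ℝ) (Λ Δ : ℝ)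
    (h1 : Ncount n z 0 = 1) (hΛ : IsLUB (lamSet n z) Λ)
    (hΔpos : 0 < Δ) (hΔgap : ∃ j : Fin n, gap n z j = Δ)
    (hΔcontact : Real.log (Ncount n z Δ) / Δ = Λ)
    (hΔmax : ∀ u : ℝ, 0 < u → (∃ j : Fin n, gap n z j = u) →
      Real.log (Ncount n z u) / u = Λ → u ≤ Δ)
    (β : ℝ) (hβ : 0 < β) (hβΛ : β ≤ Λ / 2) :
    (n : ℝ) ^ ((Real.log (Ncount n z Δ) / Real.log n) / 2) ≤ Zfun n z β ∧
      Dgap n z β ≤ (2 / Real.exp 1) * (β / Λ) := by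

  have hΛpos : 0 < Λ := by linarith
  haveI : NeZero n := ⟨by omega⟩
  haveI hne : Nonempty (Fin n) := ⟨⟨0, by omega⟩⟩
  have hn1 : (1:ℝ) < n := by exact_mod_cast hn.trans_lt' one_lt_two
  have hlogn : 0 < Real.log n := Real.log_pos hn1
  have hzb : ∀ j, z j ≤ zmax n z := fun j =>
    le_csSup (Set.finite_range z).bddAbove ⟨j, rfl⟩
  have hgap0 : ∀ j, 0 ≤ gap n z j := fun j => sub_nonneg.2 (hzb j)
  obtain ⟨j₁, hj₁⟩ : ∃ j, gap n z j = 0 := by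
    obtain ⟨j, hj⟩ := (Set.range_nonempty z).csSup_mem (Set.finite_range z)
    exact ⟨j, by simp [gap, zmax, hj]⟩
  obtain ⟨j₀, hj₀⟩ := hΔgap
  have hlogN : Real.log (Ncount n z Δ) = Λ * Δ := by
    rw [← hΔcontact]; field_simp
  have hNpos : 0 < Ncount n z Δ := by
    rw [Ncount, Set.ncard_pos (Set.toFinite _)]
    exact ⟨j₁, by simp [hj₁, hΔpos.le]⟩
  have hNexp : (Ncount n z Δ : ℝ) = Real.exp (Λ * Δ) := by
    rw [← hlogN, Real.exp_log (by exact_mod_cast hNpos)]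
  have hZpos : 0 < Zfun n z β :=
    Finset.sum_pos (fun _ _ => Real.exp_pos _) Finset.univ_nonempty
  -- lower bound on Z
  set S : Finset (Fin n) := Finset.univ.filter (fun j => gap n z j ≤ Δ) with hS
  have hcard : Ncount n z Δ = S.card := by
    rw [Ncount, show {j : Fin n | gap n z j ≤ Δ} = ↑S by ext j; simp [hS]]
    exact Set.ncard_coe_finset S
  have hZ1 : (Ncount n z Δ : ℝ) * Real.exp (-(β * Δ)) ≤ Zfun n z β := by
    rw [hcard]
    calc (S.card : ℝ) * Real.exp (-(β * Δ)) = ∑ _j ∈ S, Real.exp (-(β * Δ)) := by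
          rw [Finset.sum_const, nsmul_eq_mul]
      _ ≤ ∑ j ∈ S, Real.exp (-(β * gap n z j)) := by
          refine Finset.sum_le_sum fun j hj => Real.exp_le_exp.2 ?_
          have hgj := (Finset.mem_filter.mp hj).2
          nlinarith
      _ ≤ Zfun n z β :=
          Finset.sum_le_sum_of_subset_of_nonneg (Finset.subset_univ S)
            (fun j _ _ => (Real.exp_pos _).le)
  have hZlow : Real.exp ((Λ - β) * Δ) ≤ Zfun n z β := by
    rw [hNexp, ← Real.exp_add] at hZ1
    calc Real.exp ((Λ - β) * Δ) = Real.exp (Λ * Δ + -(β * Δ)) := by ring_nf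
      _ ≤ Zfun n z β := hZ1
  constructor
  · -- Part 1
    have he : (n : ℝ) ^ ((Real.log (Ncount n z Δ) / Real.log n) / 2)
        = Real.exp (Λ * Δ / 2) := by
      rw [Real.rpow_def_of_pos (by linarith), hlogN]
      congr 1
      field_simp
    rw [he]
    refine le_trans ?_ hZlow
    apply Real.exp_le_exp.2
    nlinarith
  · -- Part 2
    set T : ℝ := ∑ ℓ : Fin n, Real.exp (β * z ℓ) with hT
    have hTpos : 0 < T := Finset.sum_pos (fun _ _ => Real.exp_pos _) Finset.univ_nonempty
    have key : ∀ j, Real.exp (-(β * gap n z j))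
        = Real.exp (β * z j) / Real.exp (β * zmax n z) := fun j => by
      rw [← Real.exp_sub]; congr 1; rw [gap]; ring
    have hZT : Zfun n z β = T / Real.exp (β * zmax n z) := by
      rw [Zfun]; simp_rw [key]; rw [← Finset.sum_div]
    have hp : ∀ j, softmaxP n z β j = Real.exp (-(β * gap n z j)) / Zfun n z β := by
      intro j
      rw [softmaxP, hZT, key, ← hT]
      have hE := Real.exp_ne_zero (β * zmax n z)
      field_simp
    have hpmax : sSup (Set.range (softmaxP n z β)) ≤ 1 / Zfun n z β := by
      refine csSup_le (Set.range_nonempty _) ?_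
      rintro x ⟨j, rfl⟩
      rw [hp]
      exact div_le_div_of_nonneg_right (Real.exp_le_one_iff.2 (by nlinarith [hgap0 j])) hZpos.le
    have hsecond : Real.exp (-(β * Δ)) / Zfun n z β ≤ secondLargest n (softmaxP n z β) := by
      refine le_csInf (Set.range_nonempty _) ?_
      rintro x ⟨i, rfl⟩
      obtain ⟨j, hji, hjle⟩ : ∃ j, j ≠ i ∧
          Real.exp (-(β * Δ)) / Zfun n z β ≤ softmaxP n z β j := by
        by_cases h : i = j₀
        · refine ⟨j₁, fun he => hΔpos.ne ?_, ?_⟩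
          · rw [← hj₀, ← h, ← he, hj₁]
          · rw [hp, hj₁]
            apply div_le_div_of_nonneg_right _ hZpos.le
            exact Real.exp_le_exp.2 (by nlinarith)
        · exact ⟨j₀, fun he => h he.symm, le_of_eq (by rw [hp, hj₀])⟩
      refine hjle.trans (le_csSup ?_ ⟨j, hji, rfl⟩)
      exact (Set.toFinite _).image _ |>.bddAbove
    have hDle : Dgap n z β ≤ (1 - Real.exp (-(β * Δ))) / Zfun n z β := by
      rw [Dgap]
      have : (1 - Real.exp (-(β * Δ))) / Zfun n z β
          = 1 / Zfun n z β - Real.exp (-(β * Δ)) / Zfun n z β := by ring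
      rw [this]
      exact sub_le_sub hpmax hsecond
    have honem : 1 - Real.exp (-(β * Δ)) ≤ β * Δ := by
      have := Real.add_one_le_exp (-(β * Δ)); linarith
    have hstep : Dgap n z β ≤ β * Δ / Real.exp (Λ * Δ / 2) := by
      refine hDle.trans (div_le_div₀ (by positivity) honem (Real.exp_pos _) ?_)
      refine le_trans (Real.exp_le_exp.2 ?_) hZlow
      nlinarith
    refine hstep.trans ?_
    have hΛne : Λ ≠ 0 := hΛpos.ne'
    rw [div_le_iff₀ (Real.exp_pos _)]
    have hβΔ : β * Δ = 2 * (β / Λ) * (Λ * Δ / 2) := by field_simp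
    rw [hβΔ]
    exact xexp_aux (β / Λ) (Λ * Δ / 2) (by positivity) (by positivity)
end

section
/- (Resolved accumulation implies rank-gap collapse.) Let, for each n ≥ 2, scores z_{n,1},…,z_{n,n} be given, let (r_n) be a sequence with r_n → ∞, and let (β_n) be a positive sequence such that β_n < Λ_n^{(r_n)} for all sufficiently large n. Then G_n(β_n) := max_{i,j} |p_{n,i}(β_n) − p_{n,j}(β_n)| → 0. -/
open Filter MeasureTheory
open scoped ENNReal

lemma softmax_bound (n : ℕ) (z : Fin n → ℝ) (β r t : ℝ) (hβ : 0 < β) (ht : 0 < t)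
    (hr0 : 0 ≤ r) (hN : r < Real.log (Ncount n z t))
    (hlt : β < (Real.log (Ncount n z t) - r) / t) :
    ∀ j, softmaxP n z β j ≤ Real.exp (-r) := by
  intro j
  set N : ℕ := Ncount n z t with hNdef
  have hβt : β * t < Real.log N - r := by
    have := (lt_div_iff₀ ht).mp hlt
    linarith
  have hNpos : 0 < (N : ℝ) := by
    rcases Nat.eq_zero_or_pos N with h0 | h0
    · rw [h0] at hN; simp [Real.log_zero] at hN; linarith
    · exact_mod_cast h0
  -- the set of indices with small gap
  have hfin : {j : Fin n | gap n z j ≤ t}.Finite := Set.toFinite _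
  set A : Finset (Fin n) := hfin.toFinset with hA
  have hcardN : A.card = N := by
    rw [hNdef, Ncount, Set.ncard_eq_toFinset_card']
    congr 1
    simp [hA]
  have hcard : (A.card : ℝ) = (N : ℝ) := by exact_mod_cast hcardN
  have hAnonempty : A.Nonempty := by
    rw [← Finset.card_pos]
    have : (0:ℝ) < (A.card : ℝ) := by rw [hcard]; exact hNpos
    exact_mod_cast this
  have hnpos : 0 < n := by
    obtain ⟨j, _⟩ := hAnonempty
    exact j.pos
  haveI : Nonempty (Fin n) := ⟨⟨0, hnpos⟩⟩
  -- zmax bounds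
  have hbdd : BddAbove (Set.range z) := (Set.finite_range z).bddAbove
  have hz_le : ∀ i, z i ≤ zmax n z := fun i => le_csSup hbdd ⟨i, rfl⟩
  -- sum lower bound
  set S : ℝ := ∑ ℓ : Fin n, Real.exp (β * z ℓ) with hS
  have hSlower : (N : ℝ) * Real.exp (β * (zmax n z - t)) ≤ S := by
    calc (N : ℝ) * Real.exp (β * (zmax n z - t))
        = ∑ ℓ ∈ A, Real.exp (β * (zmax n z - t)) := by
          rw [Finset.sum_const, nsmul_eq_mul, hcard]
      _ ≤ ∑ ℓ ∈ A, Real.exp (β * z ℓ) := by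
          apply Finset.sum_le_sum
          intro i hi
          apply Real.exp_le_exp.mpr
          apply mul_le_mul_of_nonneg_left _ hβ.le
          have : gap n z i ≤ t := by simpa [hA] using hi
          rw [gap] at this; linarith
      _ ≤ S := Finset.sum_le_sum_of_subset_of_nonneg (Finset.subset_univ A)
          (fun i _ _ => (Real.exp_pos _).le)
  have hdpos : 0 < (N : ℝ) * Real.exp (β * (zmax n z - t)) :=
    mul_pos hNpos (Real.exp_pos _)
  have h1 : softmaxP n z β j ≤ Real.exp (β * zmax n z) /
      ((N : ℝ) * Real.exp (β * (zmax n z - t))) := by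
    rw [softmaxP]
    exact div_le_div₀ (Real.exp_pos _).le (Real.exp_le_exp.mpr
      (mul_le_mul_of_nonneg_left (hz_le j) hβ.le)) hdpos hSlower
  have h2 : Real.exp (β * zmax n z) / ((N : ℝ) * Real.exp (β * (zmax n z - t)))
      = Real.exp (β * t - Real.log N) := by
    rw [← Real.exp_log hNpos, ← Real.exp_add, ← Real.exp_sub, Real.log_exp]
    congr 1
    ring
  have h3 : Real.exp (β * t - Real.log N) ≤ Real.exp (-r) :=
    Real.exp_le_exp.mpr (by linarith)
  calc softmaxP n z β j ≤ _ := h1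
    _ = _ := h2
    _ ≤ _ := h3

theorem stmt13 (z : (n : ℕ) → Fin n → ℝ) (β r : ℕ → ℝ)
    (hβ : ∀ n, 0 < β n) (hr : Tendsto r atTop atTop)
    (h : ∀ᶠ n in atTop, ENNReal.ofReal (β n) < resolvedLam n (z n) (r n)) :
    Tendsto (fun n => Ggap n (z n) (β n)) atTop (nhds 0) := by
  have hexp : Tendsto (fun n => Real.exp (-(r n))) atTop (nhds 0) :=
    Real.tendsto_exp_atBot.comp (tendsto_neg_atBot_iff.mpr hr)
  apply squeeze_zero' ?nonneg ?upper hexp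
  case nonneg =>
    filter_upwards with n
    apply Real.sSup_nonneg
    rintro x ⟨i, j, rfl⟩
    exact abs_nonneg _
  case upper =>
    filter_upwards [h, hr.eventually_ge_atTop 0] with n hn hrn
    rw [resolvedLam, lt_iSup_iff] at hn
    obtain ⟨t, hn⟩ := hn
    rw [lt_iSup_iff] at hn
    obtain ⟨⟨ht, hNt⟩, hlt⟩ := hn
    rw [ENNReal.ofReal_lt_ofReal_iff_of_nonneg (hβ n).le] at hlt
    have hbound := softmax_bound n (z n) (β n) (r n) t (hβ n) ht hrn hNt hlt
    have hnneg : ∀ j, 0 ≤ softmaxP n (z n) (β n) j := fun j =>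
      div_nonneg (Real.exp_pos _).le (Finset.sum_nonneg fun i _ => (Real.exp_pos _).le)
    apply Real.sSup_le _ (Real.exp_pos _).le
    rintro x ⟨i, j, rfl⟩
    rw [abs_sub_le_iff]
    exact ⟨by linarith [hbound i, hnneg j], by linarith [hbound j, hnneg i]⟩
end

section
/- (Separation of top-two collapse and rank collapse at bounded contact-count entropy.) For n ≥ 3 define scores z_{n,1} = 0, z_{n,2} = −(log 2)/(log n), and z_{n,j} = −log n for 3 ≤ j ≤ n, and set β_n := √(log n). Then: (i) Λ_n = log n, so β_n/Λ_n → 0; (ii) Z_n(β_n) → 2 as n → ∞; (iii) the top-two weight gap satisfies D_n(β_n) → 0; and (iv) the rank gap satisfies G_n(β_n) := max_{i,j} |p_{n,i}(β_n) − p_{n,j}(β_n)| → 1/2, so rank collapse fails even though top-two collapse holds. -/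
open Filter MeasureTheory
open scoped ENNReal

/-- The score family of the finite-contact example: `z_{n,1} = 0`,
`z_{n,2} = -(log 2)/(log n)`, `z_{n,j} = -log n` for `j ≥ 3`. -/
noncomputable def zex (n : ℕ) : Fin n → ℝ := fun j =>
  if (j : ℕ) = 0 then 0
  else if (j : ℕ) = 1 then -(Real.log 2 / Real.log n)
  else -Real.log n

/-!
For `zex n` the gaps are `0`, `a = log 2 / log n` and `log n` (the last one `n - 2` times), so
`N(t)` equals `1`, `2`, `n` on `[0, a)`, `[a, log n)`, `[log n, ∞)` and `log N(t) / t` peaks at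
`t = a` with value `log 2 / a = log n`. At `β = √(log n)` we have `β a = log 2 / √(log n) → 0` and
`(n - 2) e^{-β log n} ≤ e^{log n - (log n)^{3/2}} → 0`, so `Z → 2`. The two largest weights
`1 / Z` and `e^{-β a} / Z` therefore merge, while the smallest one `e^{-β log n} / Z` vanishes
and the rank gap tends to `1 / 2`.
-/

section Scores

variable {n : ℕ} {z : Fin n → ℝ} {β : ℝ}

theorem softmaxP_eq_exp_neg_gap_div_Zfun (j : Fin n) :
    softmaxP n z β j = Real.exp (-(β * gap n z j)) / Zfun n z β := by
  have hshift : ∀ k, Real.exp (β * z k) = Real.exp (β * zmax n z) * Real.exp (-(β * gap n z k)) :=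
    fun k => by rw [← Real.exp_add, gap]; ring_nf
  simp only [softmaxP, Zfun, hshift, ← Finset.mul_sum]
  exact mul_div_mul_left _ _ (Real.exp_ne_zero _)

theorem softmaxP_le_softmaxP (hβ : 0 ≤ β) {i j : Fin n} (h : z j ≤ z i) :
    softmaxP n z β j ≤ softmaxP n z β i :=
  div_le_div_of_nonneg_right (Real.exp_le_exp.2 (mul_le_mul_of_nonneg_left h hβ))
    (Finset.sum_nonneg fun _ _ => (Real.exp_pos _).le)

theorem secondLargest_eq {v : Fin n → ℝ} {i₀ i₁ : Fin n} (h₁₀ : i₁ ≠ i₀)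
    (hmax : ∀ j, v j ≤ v i₀) (hsecond : ∀ j ≠ i₀, v j ≤ v i₁) :
    secondLargest n v = v i₁ := by
  have hsup₀ : sSup (v '' {j | j ≠ i₀}) = v i₁ :=
    IsGreatest.csSup_eq ⟨⟨i₁, h₁₀, rfl⟩, by rintro _ ⟨j, hj, rfl⟩; exact hsecond j hj⟩
  refine IsLeast.csInf_eq ⟨⟨i₀, hsup₀⟩, ?_⟩
  rintro _ ⟨i, rfl⟩
  by_cases hi : i = i₀
  · subst hi; exact hsup₀.ge
  · calc v i₁ ≤ v i₀ := hmax i₁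
      _ ≤ sSup (v '' {j | j ≠ i}) :=
        le_csSup (Set.toFinite _).bddAbove ⟨i₀, Ne.symm hi, rfl⟩

theorem sSup_abs_sub_eq {ι : Type*} {v : ι → ℝ} {i₀ i₁ : ι}
    (hmax : ∀ j, v j ≤ v i₀) (hmin : ∀ j, v i₁ ≤ v j) :
    sSup {x | ∃ i j, x = |v i - v j|} = v i₀ - v i₁ := by
  refine IsGreatest.csSup_eq ⟨⟨i₀, i₁, (abs_of_nonneg (sub_nonneg.2 (hmin i₀))).symm⟩, ?_⟩
  rintro _ ⟨i, j, rfl⟩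
  rw [abs_sub_le_iff]
  constructor <;> linarith [hmax i, hmax j, hmin i, hmin j]

theorem Dgap_eq_sub (hβ : 0 ≤ β) {i₀ i₁ : Fin n} (h₁₀ : i₁ ≠ i₀)
    (hmax : ∀ j, z j ≤ z i₀) (hsecond : ∀ j ≠ i₀, z j ≤ z i₁) :
    Dgap n z β = softmaxP n z β i₀ - softmaxP n z β i₁ := by
  have hmax' : ∀ j, softmaxP n z β j ≤ softmaxP n z β i₀ :=
    fun j => softmaxP_le_softmaxP hβ (hmax j)
  rw [Dgap, secondLargest_eq h₁₀ hmax' fun j hj => softmaxP_le_softmaxP hβ (hsecond j hj),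
    IsGreatest.csSup_eq ⟨Set.mem_range_self i₀, Set.forall_mem_range.2 hmax'⟩]

theorem Ggap_eq_sub (hβ : 0 ≤ β) {i₀ i₁ : Fin n}
    (hmax : ∀ j, z j ≤ z i₀) (hmin : ∀ j, z i₁ ≤ z j) :
    Ggap n z β = softmaxP n z β i₀ - softmaxP n z β i₁ :=
  sSup_abs_sub_eq (fun j => softmaxP_le_softmaxP hβ (hmax j))
    fun j => softmaxP_le_softmaxP hβ (hmin j)

theorem Ncount_le_of_forall_gap_le {t : ℝ} {k : ℕ}
    (h : ∀ j, gap n z j ≤ t → (j : ℕ) < k) : Ncount n z t ≤ k :=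
  (Set.ncard_le_ncard_of_injOn Fin.val h Fin.val_injective.injOn).trans_eq (Set.ncard_Iio_nat k)

end Scores

theorem log_natCast_le_log_natCast {k m : ℕ} (h : k ≤ m) : Real.log k ≤ Real.log m := by
  rcases k.eq_zero_or_pos with rfl | hk
  · simpa using Real.log_natCast_nonneg m
  · exact Real.log_le_log (by exact_mod_cast hk) (by exact_mod_cast h)

section Example

variable {n : ℕ}

theorem one_lt_log_of_three_le (hn : 3 ≤ n) : 1 < Real.log n := by
  rw [Real.lt_log_iff_exp_lt (by positivity)]
  have : (3 : ℝ) ≤ n := by exact_mod_cast hn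
  linarith [Real.exp_one_lt_d9]

theorem log_two_div_log_pos (hn : 3 ≤ n) : 0 < Real.log 2 / Real.log n :=
  div_pos (Real.log_pos one_lt_two) (by linarith [one_lt_log_of_three_le hn])

theorem log_two_div_log_lt_log (hn : 3 ≤ n) : Real.log 2 / Real.log n < Real.log n := by
  have hL := one_lt_log_of_three_le hn
  rw [div_lt_iff₀ (by linarith)]
  nlinarith [Real.log_two_lt_d9]

theorem zex_le_zex_zero (hn : 3 ≤ n) (j : Fin n) : zex n j ≤ zex n ⟨0, by omega⟩ := by
  have := log_two_div_log_pos hn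
  have := one_lt_log_of_three_le hn
  simp only [zex]
  split_ifs <;> linarith

theorem zex_le_zex_one (hn : 3 ≤ n) {j : Fin n} (hj : j ≠ ⟨0, by omega⟩) :
    zex n j ≤ zex n ⟨1, by omega⟩ := by
  have := log_two_div_log_lt_log hn
  have hj : (j : ℕ) ≠ 0 := fun h => hj (Fin.ext h)
  simp only [zex, hj]
  split_ifs <;> linarith

theorem zex_two_le (hn : 3 ≤ n) (j : Fin n) : zex n ⟨2, by omega⟩ ≤ zex n j := by
  have := log_two_div_log_lt_log hn
  have := one_lt_log_of_three_le hn
  rw [show zex n ⟨2, by omega⟩ = -Real.log n by simp [zex], zex]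
  split_ifs <;> linarith

theorem gap_zex (hn : 3 ≤ n) (j : Fin n) :
    gap n (zex n) j = if (j : ℕ) = 0 then 0
      else if (j : ℕ) = 1 then Real.log 2 / Real.log n else Real.log n := by
  have hmax : zmax n (zex n) = 0 := by
    rw [zmax, IsGreatest.csSup_eq
      ⟨Set.mem_range_self _, Set.forall_mem_range.2 (zex_le_zex_zero hn)⟩]
    simp [zex]
  rw [gap, hmax, zex]
  split_ifs <;> ring

theorem Zfun_zex (hn : 3 ≤ n) (β : ℝ) :
    Zfun n (zex n) β = 1 + Real.exp (-(β * (Real.log 2 / Real.log n)))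
      + ((n : ℝ) - 2) * Real.exp (-(β * Real.log n)) := by
  obtain ⟨m, rfl⟩ : ∃ m, n = m + 3 := ⟨n - 3, by omega⟩
  rw [Zfun, Fin.sum_univ_succ, Fin.sum_univ_succ]
  simp [gap_zex hn]
  ring

theorem Dgap_zex (hn : 3 ≤ n) {β : ℝ} (hβ : 0 ≤ β) :
    Dgap n (zex n) β
      = (1 - Real.exp (-(β * (Real.log 2 / Real.log n)))) / Zfun n (zex n) β := by
  rw [Dgap_eq_sub hβ (by simp [Fin.ext_iff]) (zex_le_zex_zero hn) fun j => zex_le_zex_one hn,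
    softmaxP_eq_exp_neg_gap_div_Zfun, softmaxP_eq_exp_neg_gap_div_Zfun, gap_zex hn, gap_zex hn]
  simp [sub_div]

theorem Ggap_zex (hn : 3 ≤ n) {β : ℝ} (hβ : 0 ≤ β) :
    Ggap n (zex n) β = (1 - Real.exp (-(β * Real.log n))) / Zfun n (zex n) β := by
  rw [Ggap_eq_sub hβ (zex_le_zex_zero hn) (zex_two_le hn),
    softmaxP_eq_exp_neg_gap_div_Zfun, softmaxP_eq_exp_neg_gap_div_Zfun, gap_zex hn, gap_zex hn]
  simp [sub_div]

theorem Ncount_zex_log_two_div_log (hn : 3 ≤ n) :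
    Ncount n (zex n) (Real.log 2 / Real.log n) = 2 := by
  have ha := log_two_div_log_pos hn
  have haL := log_two_div_log_lt_log hn
  refine le_antisymm (Ncount_le_of_forall_gap_le fun j hj => ?_) ?_
  · by_contra! h2
    rw [gap_zex hn, if_neg (by omega), if_neg (by omega)] at hj
    linarith
  · calc 2 = ({⟨0, by omega⟩, ⟨1, by omega⟩} : Set (Fin n)).ncard :=
          (Set.ncard_pair (by simp [Fin.ext_iff])).symm
      _ ≤ Ncount n (zex n) (Real.log 2 / Real.log n) := by
          refine Set.ncard_le_ncard ?_ (Set.toFinite _)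
          rintro _ (rfl | rfl) <;> simp [gap_zex hn, ha.le]

theorem log_Ncount_zex_le (hn : 3 ≤ n) {t : ℝ} (ht : 0 < t) :
    Real.log (Ncount n (zex n) t) ≤ Real.log n * t := by
  have hL := one_lt_log_of_three_le hn
  rcases lt_or_ge t (Real.log 2 / Real.log n) with hta | hat
  · have h1 : Ncount n (zex n) t ≤ 1 := Ncount_le_of_forall_gap_le fun j hj => by
      by_contra! h1
      rw [gap_zex hn, if_neg (by omega)] at hj
      split_ifs at hj <;> linarith [log_two_div_log_lt_log hn]
    calc Real.log (Ncount n (zex n) t) ≤ 0 :=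
          Real.log_nonpos (Nat.cast_nonneg _) (by exact_mod_cast h1)
      _ ≤ Real.log n * t := by positivity
  rcases lt_or_ge t (Real.log n) with htL | hLt
  · have h2 : Ncount n (zex n) t ≤ 2 := Ncount_le_of_forall_gap_le fun j hj => by
      by_contra! h2
      rw [gap_zex hn, if_neg (by omega), if_neg (by omega)] at hj
      linarith
    calc Real.log (Ncount n (zex n) t) ≤ Real.log 2 := by
          exact_mod_cast log_natCast_le_log_natCast h2
      _ = Real.log n * (Real.log 2 / Real.log n) := by field_simp
      _ ≤ Real.log n * t := by gcongr
  · calc Real.log (Ncount n (zex n) t) ≤ Real.log n :=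
          log_natCast_le_log_natCast (Ncount_le_of_forall_gap_le fun j _ => j.isLt)
      _ ≤ Real.log n * t := by nlinarith

theorem isLUB_lamSet_zex (hn : 3 ≤ n) : IsLUB (lamSet n (zex n)) (Real.log n) := by
  refine IsGreatest.isLUB ⟨⟨_, log_two_div_log_pos hn, ?_⟩, ?_⟩
  · rw [Ncount_zex_log_two_div_log hn, Nat.cast_ofNat, div_div_eq_mul_div,
      mul_div_cancel_left₀ _ (Real.log_pos one_lt_two).ne']
  · rintro _ ⟨t, ht, rfl⟩
    exact (div_le_iff₀ ht).2 (log_Ncount_zex_le hn ht)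

end Example

section Limits

open Real

theorem tendsto_log_natCast_atTop : Tendsto (fun n : ℕ => log n) atTop atTop :=
  tendsto_log_atTop.comp tendsto_natCast_atTop_atTop

theorem tendsto_sqrt_log_natCast_atTop : Tendsto (fun n : ℕ => √(log n)) atTop atTop :=
  tendsto_sqrt_atTop.comp tendsto_log_natCast_atTop

theorem tendsto_sqrt_log_div_log : Tendsto (fun n : ℕ => √(log n) / log n) atTop (nhds 0) := by
  simp_rw [sqrt_div_self]
  exact tendsto_inv_atTop_zero.comp tendsto_sqrt_log_natCast_atTop

theorem tendsto_exp_neg_sqrt_log_mul_log_two_div_log :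
    Tendsto (fun n : ℕ => exp (-(√(log n) * (log 2 / log n)))) atTop (nhds 1) := by
  have h := ((tendsto_sqrt_log_div_log.const_mul (log 2)).neg).rexp
  rw [mul_zero, neg_zero, exp_zero] at h
  refine h.congr fun n => ?_
  ring_nf

theorem tendsto_exp_neg_sqrt_log_mul_log :
    Tendsto (fun n : ℕ => exp (-(√(log n) * log n))) atTop (nhds 0) :=
  tendsto_exp_atBot.comp <| tendsto_neg_atTop_atBot.comp <|
    tendsto_sqrt_log_natCast_atTop.atTop_mul_atTop₀ tendsto_log_natCast_atTop

theorem tendsto_natCast_mul_exp_neg_sqrt_log_mul_log :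
    Tendsto (fun n : ℕ => (n : ℝ) * exp (-(√(log n) * log n))) atTop (nhds 0) := by
  have hgrowth : Tendsto (fun n : ℕ => log n * (√(log n) - 1)) atTop atTop :=
    tendsto_log_natCast_atTop.atTop_mul_atTop₀ (tendsto_atTop_add_const_right _ (-1)
      tendsto_sqrt_log_natCast_atTop)
  refine (tendsto_exp_atBot.comp (tendsto_neg_atTop_atBot.comp hgrowth)).congr' ?_
  filter_upwards [eventually_ge_atTop 1] with n hn
  have hpos : (0 : ℝ) < n := by exact_mod_cast hn
  rw [Function.comp_apply, Function.comp_apply, ← exp_log hpos, ← exp_add, exp_log hpos]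
  ring_nf

theorem tendsto_Zfun_zex :
    Tendsto (fun n : ℕ => Zfun n (zex n) √(log n)) atTop (nhds 2) := by
  have h := ((tendsto_const_nhds (x := (1 : ℝ))).add
    tendsto_exp_neg_sqrt_log_mul_log_two_div_log).add
    (tendsto_natCast_mul_exp_neg_sqrt_log_mul_log.sub
      (tendsto_exp_neg_sqrt_log_mul_log.const_mul 2))
  norm_num at h
  refine h.congr' ?_
  filter_upwards [eventually_ge_atTop 3] with n hn
  rw [Zfun_zex hn]
  ring

theorem tendsto_Dgap_zex :
    Tendsto (fun n : ℕ => Dgap n (zex n) √(log n)) atTop (nhds 0) := by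
  have h := ((tendsto_const_nhds (x := (1 : ℝ))).sub
    tendsto_exp_neg_sqrt_log_mul_log_two_div_log).div tendsto_Zfun_zex two_ne_zero
  rw [sub_self, zero_div] at h
  refine h.congr' ?_
  filter_upwards [eventually_ge_atTop 3] with n hn
  exact (Dgap_zex hn (sqrt_nonneg _)).symm

theorem tendsto_Ggap_zex :
    Tendsto (fun n : ℕ => Ggap n (zex n) √(log n)) atTop (nhds (1 / 2)) := by
  have h := ((tendsto_const_nhds (x := (1 : ℝ))).sub tendsto_exp_neg_sqrt_log_mul_log).div
    tendsto_Zfun_zex two_ne_zero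
  rw [sub_zero] at h
  refine h.congr' ?_
  filter_upwards [eventually_ge_atTop 3] with n hn
  exact (Ggap_zex hn (sqrt_nonneg _)).symm

end Limits

theorem stmt19 :
    (∀ n : ℕ, 3 ≤ n → IsLUB (lamSet n (zex n)) (Real.log n)) ∧
    Tendsto (fun n : ℕ => Real.sqrt (Real.log n) / Real.log n) atTop (nhds 0) ∧
    Tendsto (fun n : ℕ => Zfun n (zex n) (Real.sqrt (Real.log n))) atTop (nhds 2) ∧
    Tendsto (fun n : ℕ => Dgap n (zex n) (Real.sqrt (Real.log n))) atTop (nhds 0) ∧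
    Tendsto (fun n : ℕ => Ggap n (zex n) (Real.sqrt (Real.log n))) atTop (nhds (1 / 2)) := by
  exact ⟨fun _ => isLUB_lamSet_zex, tendsto_sqrt_log_div_log, tendsto_Zfun_zex, tendsto_Dgap_zex,
    tendsto_Ggap_zex⟩
end
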